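/- Let n ∈ ℕ, λ > 0, let M ∈ ℝ^{n×n} be a symmetric positive semidefinite matrix, let z ∈ {0,1}ⁿ be a binary vector, and let Z = diag(z). Set A = Z(M + λI)Z and B = (λI + ZMZ)^{-1} − (1/λ)(I − Z). Then B is a Moore–Penrose pseudoinverse of A, i.e., ABA = A, BAB = B, (AB)ᵀ = AB, and (BA)ᵀ = BA. -/

import Mathlib

/-!
Write `C = λI + ZMZ`, which is positive definite, hence invertible. Since `Z² = Z`, `C`
commutes with `Z`, `A = ZC`, and `(I - Z)C = λ(I - Z)`, so `(I - Z)C⁻¹ = λ⁻¹(I - Z)`, i.e.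
`B = ZC⁻¹`. Hence `AB = BA = Z`, and all four Penrose equations reduce to `Z² = Z = Zᵀ`.
-/

open Matrix

namespace Matrix

variable {m n R : Type*} [Fintype m] [Fintype n]

def IsMoorePenroseInverse [Semiring R] (A : Matrix m n R) (B : Matrix n m R) : Prop :=
  A * B * A = A ∧ B * A * B = B ∧ (A * B)ᵀ = A * B ∧ (B * A)ᵀ = B * A

theorem isMoorePenroseInverse_of_mul_eq [Semiring R]
    {A : Matrix m n R} {B : Matrix n m R} {P : Matrix m m R} {Q : Matrix n n R}
    (hP : Pᵀ = P) (hQ : Qᵀ = Q) (hAB : A * B = P) (hBA : B * A = Q)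
    (hPA : P * A = A) (hQB : Q * B = B) : IsMoorePenroseInverse A B := by
  refine ⟨?_, ?_, ?_, ?_⟩
  · rw [hAB, hPA]
  · rw [hBA, hQB]
  · rw [hAB, hP]
  · rw [hBA, hQ]

variable [DecidableEq n]

theorem isIdempotentElem_diagonal [Semiring R] {z : n → R} (hz : ∀ i, z i = 0 ∨ z i = 1) :
    IsIdempotentElem (diagonal z) := by
  rw [IsIdempotentElem, diagonal_mul_diagonal]
  congr 1
  funext i
  rcases hz i with h | h <;> simp [h]

theorem isMoorePenroseInverse_mul_mul_inv [CommRing R] {P C : Matrix n n R}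
    (hP : IsIdempotentElem P) (hPt : Pᵀ = P) (hC : IsUnit C.det) (hPC : Commute P C) :
    IsMoorePenroseInverse (P * C) (P * C⁻¹) := by
  have hPCP : P * C * P = P * C := by rw [mul_assoc, ← hPC.eq, ← mul_assoc, hP.eq]
  refine isMoorePenroseInverse_of_mul_eq hPt hPt ?_ ?_ ?_ ?_
  · rw [← mul_assoc, hPCP, mul_assoc, mul_nonsing_inv C hC, mul_one]
  · rw [hPC.eq, ← mul_assoc, mul_assoc P, nonsing_inv_mul C hC, mul_one, hP.eq]
  · rw [← mul_assoc, hP.eq]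
  · rw [← mul_assoc, hP.eq]

section Compression

variable [CommRing R] {P : Matrix n n R} (hP : IsIdempotentElem P) (a : R) (M : Matrix n n R)
include hP

theorem mul_add_smul_one_mul :
    P * (M + a • 1) * P = P * (a • 1 + P * M * P) := by
  rw [mul_add, add_mul, mul_smul_comm, smul_mul_assoc, mul_one, hP.eq, mul_add, mul_smul_comm,
    mul_one, ← mul_assoc, ← mul_assoc, hP.eq, add_comm]

theorem commute_smul_one_add_mul_mul : Commute P (a • 1 + P * M * P) := by
  rw [Commute, SemiconjBy, mul_add, add_mul, mul_smul_comm, smul_mul_assoc, mul_one, one_mul,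
    ← mul_assoc P (P * M) P, ← mul_assoc P P M, hP.eq, mul_assoc (P * M) P P, hP.eq]

theorem one_sub_mul_smul_one_add_mul_mul : (1 - P) * (a • 1 + P * M * P) = a • (1 - P) := by
  rw [mul_add, mul_smul_comm, mul_one, ← mul_assoc, ← mul_assoc, hP.one_sub_mul_self, zero_mul,
    zero_mul, add_zero]

end Compression

theorem mul_inv_eq_inv_smul_of_mul_eq_smul [Field R] {X C : Matrix n n R} {a : R}
    (hC : IsUnit C.det) (ha : a ≠ 0) (h : X * C = a • X) : X * C⁻¹ = a⁻¹ • X := by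
  calc X * C⁻¹ = a⁻¹ • (a • X) * C⁻¹ := by rw [inv_smul_smul₀ ha]
    _ = a⁻¹ • X := by rw [← h, smul_mul_assoc, mul_assoc, mul_nonsing_inv C hC, mul_one]

theorem posDef_smul_one_add_mul_mul {a : ℝ} (ha : 0 < a) {M P : Matrix n n ℝ}
    (hM : M.PosSemidef) (hP : Pᵀ = P) : (a • (1 : Matrix n n ℝ) + P * M * P).PosDef := by
  have hPMP : (P * M * P).PosSemidef := by
    simpa [hP] using hM.mul_mul_conjTranspose_same P
  refine PosDef.add_posSemidef ?_ hPMP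
  rw [smul_one_eq_diagonal]
  exact posDef_diagonal_iff.mpr fun _ => ha

end Matrix

theorem pseudoinverse_formula (n : ℕ) (lam : ℝ) (hlam : 0 < lam)
    (M : Matrix (Fin n) (Fin n) ℝ) (hM : M.PosSemidef)
    (z : Fin n → ℝ) (hz : ∀ i, z i = 0 ∨ z i = 1)
    (Z : Matrix (Fin n) (Fin n) ℝ) (hZ : Z = Matrix.diagonal z)
    (A B : Matrix (Fin n) (Fin n) ℝ)
    (hA : A = Z * (M + lam • (1 : Matrix (Fin n) (Fin n) ℝ)) * Z)
    (hB : B = (lam • (1 : Matrix (Fin n) (Fin n) ℝ) + Z * M * Z)⁻¹ -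
      (1 / lam) • ((1 : Matrix (Fin n) (Fin n) ℝ) - Z)) :
    A * B * A = A ∧ B * A * B = B ∧ (A * B)ᵀ = A * B ∧ (B * A)ᵀ = B * A := by
  have hZ2 : IsIdempotentElem Z := hZ ▸ isIdempotentElem_diagonal hz
  have hZt : Zᵀ = Z := hZ ▸ diagonal_transpose z
  set C := lam • (1 : Matrix (Fin n) (Fin n) ℝ) + Z * M * Z
  have hC : IsUnit C.det := (posDef_smul_one_add_mul_mul hlam hM hZt).det_pos.ne'.isUnit
  have hA' : A = Z * C := hA.trans (mul_add_smul_one_mul hZ2 lam M)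
  have hB' : B = Z * C⁻¹ := by
    have hcompl := mul_inv_eq_inv_smul_of_mul_eq_smul hC hlam.ne'
      (one_sub_mul_smul_one_add_mul_mul hZ2 lam M)
    rw [hB, one_div, ← hcompl, sub_mul, one_mul, sub_sub_cancel]
  rw [hA', hB']
  exact isMoorePenroseInverse_mul_mul_inv hZ2 hZt hC (commute_smul_one_add_mul_mul hZ2 lam M)
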